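/- Certificate of dual infeasibility from the HSDE: suppose u = (x,s,y,t,τ) ∈ K and v = (h,z,r,w,κ) ∈ K* satisfy v = Q u, τ = 0, and c^T x < 0. Then the decomposed dual problem is infeasible: there exist no ŷ ∈ R^m and t̂ ∈ R^{n_d} with A^T ŷ + H^T t̂ = c and t̂ ∈ S. (Indeed, τ = 0 forces A x = 0 and s = H x ∈ S, so for any dual feasible (ŷ, t̂) one would get c^T x = ŷ^T A x + ⟨t̂, H x⟩ = ⟨t̂, s⟩ ≥ 0 by self-duality of S, a contradiction.) -/

import Mathlib

open Matrix BigOperators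

/-- Index type for the stacked (vectorized) semidefinite variables: one `|C_k| × |C_k|`
block of coordinates for each clique `C_k`, so that its cardinality is `n_d = Σ_k |C_k|²`. -/
abbrev CliqueIdx {n p : ℕ} (C : Fin p → Finset (Fin n)) : Type :=
  Σ k : Fin p, Fin (C k).card × Fin (C k).card

/-- Membership in the product cone `S = S_1 × ⋯ × S_p` of vectorized PSD cones:
`s ∈ S` iff, for each clique `k`, the `|C_k| × |C_k|` matrix formed by the corresponding
block of coordinates of `s` is positive semidefinite. -/
def MemS {n p : ℕ} (C : Fin p → Finset (Fin n)) (s : CliqueIdx C → ℝ) : Prop :=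
  ∀ k : Fin p,
    Matrix.PosSemidef (Matrix.of fun i j : Fin (C k).card => s ⟨k, (i, j)⟩)

/-- Index type for the HSDE variables `u = (x, s, y, t, τ)` and `v = (h, z, r, w, κ)`. -/
abbrev HsdeIdx {n p : ℕ} (C : Fin p → Finset (Fin n)) (N m : ℕ) : Type :=
  Fin N ⊕ (CliqueIdx C ⊕ (Fin m ⊕ (CliqueIdx C ⊕ Unit)))

/-- Stacking of the five components into a single vector. -/
def stackVec {n p N m : ℕ} (C : Fin p → Finset (Fin n))
    (x : Fin N → ℝ) (s : CliqueIdx C → ℝ) (y : Fin m → ℝ) (t : CliqueIdx C → ℝ) (τ : ℝ) :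
    HsdeIdx C N m → ℝ :=
  Sum.elim x (Sum.elim s (Sum.elim y (Sum.elim t fun _ => τ)))

/-- The HSDE matrix
`Q = [[0, 0, −Aᵀ, −Hᵀ, c],[0, 0, 0, I, 0],[A, 0, 0, 0, −b],[H, −I, 0, 0, 0],[−cᵀ, 0, bᵀ, 0, 0]]`. -/
def hsdeQ {n p N m : ℕ} (C : Fin p → Finset (Fin n))
    (A : Matrix (Fin m) (Fin N) ℝ) (H : Matrix (CliqueIdx C) (Fin N) ℝ)
    (b : Fin m → ℝ) (c : Fin N → ℝ) :
    Matrix (HsdeIdx C N m) (HsdeIdx C N m) ℝ :=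
  fun i j =>
    match i, j with
    | Sum.inl i, Sum.inr (Sum.inr (Sum.inl j)) => -A j i
    | Sum.inl i, Sum.inr (Sum.inr (Sum.inr (Sum.inl j))) => -H j i
    | Sum.inl i, Sum.inr (Sum.inr (Sum.inr (Sum.inr _))) => c i
    | Sum.inr (Sum.inl i), Sum.inr (Sum.inr (Sum.inr (Sum.inl j))) =>
        if i = j then 1 else 0
    | Sum.inr (Sum.inr (Sum.inl i)), Sum.inl j => A i j
    | Sum.inr (Sum.inr (Sum.inl i)), Sum.inr (Sum.inr (Sum.inr (Sum.inr _))) => -b i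
    | Sum.inr (Sum.inr (Sum.inr (Sum.inl i))), Sum.inl j => H i j
    | Sum.inr (Sum.inr (Sum.inr (Sum.inl i))), Sum.inr (Sum.inl j) =>
        if i = j then -1 else 0
    | Sum.inr (Sum.inr (Sum.inr (Sum.inr _))), Sum.inl j => -c j
    | Sum.inr (Sum.inr (Sum.inr (Sum.inr _))), Sum.inr (Sum.inr (Sum.inl j)) => b j
    | _, _ => 0

/-!
With `τ = 0`, the third and fourth block rows of `v = Q u` read `A x = r = 0` and
`H x - s = w = 0`, so `x` is an improving primal ray: `A x = 0`, `H x ∈ S`, `cᵀx < 0`.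
A dual feasible `(ŷ, t̂)` would give `cᵀx = ŷᵀ A x + ⟨t̂, H x⟩ = ⟨t̂, s⟩ ≥ 0`, because the
Frobenius product of two PSD matrices is `tr (T S) = tr (B T Bᴴ) ≥ 0` for `S = Bᴴ B`.
-/

namespace Matrix

theorem PosSemidef.trace_mul_nonneg {ι : Type*} [Fintype ι] {T S : Matrix ι ι ℝ}
    (hT : T.PosSemidef) (hS : S.PosSemidef) : 0 ≤ (T * S).trace := by
  classical
  open scoped MatrixOrder Matrix.Norms.L2Operator in
  obtain ⟨B, rfl⟩ := CStarAlgebra.nonneg_iff_eq_star_mul_self.mp hS.nonneg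
  rw [← Matrix.mul_assoc, trace_mul_comm, ← Matrix.mul_assoc]
  exact (hT.mul_mul_conjTranspose_same B).trace_nonneg

theorem PosSemidef.vec_dotProduct_vec_nonneg {ι : Type*} [Fintype ι] {T S : Matrix ι ι ℝ}
    (hT : T.PosSemidef) (hS : S.PosSemidef) : 0 ≤ vec T ⬝ᵥ vec S := by
  rw [vec_dotProduct_vec]
  exact hT.transpose.trace_mul_nonneg hS

end Matrix

theorem MemS.dotProduct_nonneg {n p : ℕ} {C : Fin p → Finset (Fin n)} {t s : CliqueIdx C → ℝ}
    (ht : MemS C t) (hs : MemS C s) : 0 ≤ t ⬝ᵥ s := by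
  rw [dotProduct, Fintype.sum_sigma]
  -- `vec` is column-major, so the `k`-th block of `t` is `vec` of the transposed block matrix.
  exact Finset.sum_nonneg fun k _ => (ht k).transpose.vec_dotProduct_vec_nonneg (hs k).transpose

section HSDE

variable {n p N m : ℕ} (C : Fin p → Finset (Fin n))
  (A : Matrix (Fin m) (Fin N) ℝ) (H : Matrix (CliqueIdx C) (Fin N) ℝ)
  (b : Fin m → ℝ) (c : Fin N → ℝ)

theorem stackVec_inj {x x' : Fin N → ℝ} {s s' : CliqueIdx C → ℝ} {y y' : Fin m → ℝ}
    {t t' : CliqueIdx C → ℝ} {τ τ' : ℝ} :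
    stackVec C x s y t τ = stackVec C x' s' y' t' τ' ↔
      x = x' ∧ s = s' ∧ y = y' ∧ t = t' ∧ τ = τ' := by
  simp [stackVec, funext_iff]

theorem hsdeQ_mulVec_stackVec (x : Fin N → ℝ) (s : CliqueIdx C → ℝ) (y : Fin m → ℝ)
    (t : CliqueIdx C → ℝ) (τ : ℝ) :
    hsdeQ C A H b c *ᵥ stackVec C x s y t τ =
      stackVec C (τ • c - Aᵀ *ᵥ y - Hᵀ *ᵥ t) t (A *ᵥ x - τ • b) (H *ᵥ x - s)
        (b ⬝ᵥ y - c ⬝ᵥ x) := by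
  ext (i | i | i | i | i) <;>
    simp only [mulVec, dotProduct, Fintype.sum_sum_type, stackVec, Sum.elim_inl, Sum.elim_inr,
      hsdeQ] <;>
    simp [mulVec, dotProduct, Finset.sum_neg_distrib, ite_mul] <;>
    ring

theorem not_exists_dual_feasible_of_primal_ray {x : Fin N → ℝ} (hAx : A *ᵥ x = 0)
    (hHx : MemS C (H *ᵥ x)) (hcx : c ⬝ᵥ x < 0) :
    ¬ ∃ (y : Fin m → ℝ) (t : CliqueIdx C → ℝ), Aᵀ *ᵥ y + Hᵀ *ᵥ t = c ∧ MemS C t := by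
  rintro ⟨y, t, rfl, ht⟩
  have : (Aᵀ *ᵥ y + Hᵀ *ᵥ t) ⬝ᵥ x = t ⬝ᵥ (H *ᵥ x) := by
    rw [add_dotProduct, mulVec_transpose, mulVec_transpose, ← dotProduct_mulVec,
      ← dotProduct_mulVec, hAx, dotProduct_zero, zero_add]
  exact hcx.not_ge (this ▸ ht.dotProduct_nonneg hHx)

end HSDE

theorem hsde_dual_infeasibility_general {n p N m : ℕ} (C : Fin p → Finset (Fin n))
    (A : Matrix (Fin m) (Fin N) ℝ) (H : Matrix (CliqueIdx C) (Fin N) ℝ)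
    (b : Fin m → ℝ) (c : Fin N → ℝ)
    (x : Fin N → ℝ) (s : CliqueIdx C → ℝ) (y : Fin m → ℝ) (t : CliqueIdx C → ℝ) (τ : ℝ)
    (h : Fin N → ℝ) (z : CliqueIdx C → ℝ) (r : Fin m → ℝ) (w : CliqueIdx C → ℝ) (κ : ℝ)
    (hs : MemS C s)
    (hr : r = 0) (hw : w = 0)
    (heq : stackVec C h z r w κ = (hsdeQ C A H b c) *ᵥ stackVec C x s y t τ)
    (hτ : τ = 0) (hcx : c ⬝ᵥ x < 0) :
    ¬ ∃ (y' : Fin m → ℝ) (t' : CliqueIdx C → ℝ),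
        Aᵀ *ᵥ y' + Hᵀ *ᵥ t' = c ∧ MemS C t' := by
  rw [hsdeQ_mulVec_stackVec, stackVec_inj, hr, hw, hτ] at heq
  obtain ⟨-, -, hAx, hHx, -⟩ := heq
  rw [zero_smul, sub_zero] at hAx
  rw [eq_comm, sub_eq_zero] at hHx
  exact not_exists_dual_feasible_of_primal_ray C A H c hAx.symm (hHx ▸ hs) hcx

/-- **Certificate of dual infeasibility from the HSDE.** If `u = (x,s,y,t,τ) ∈ K` and
`v = (h,z,r,w,κ) ∈ K*` satisfy `v = Q u`, `τ = 0` and `cᵀx < 0`, then the decomposed dual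
problem is infeasible: there are no `ŷ, t̂` with `Aᵀ ŷ + Hᵀ t̂ = c` and `t̂ ∈ S`. -/
theorem hsde_dual_infeasibility {n p N m : ℕ} (C : Fin p → Finset (Fin n))
    (A : Matrix (Fin m) (Fin N) ℝ) (H : Matrix (CliqueIdx C) (Fin N) ℝ)
    (b : Fin m → ℝ) (c : Fin N → ℝ)
    (x : Fin N → ℝ) (s : CliqueIdx C → ℝ) (y : Fin m → ℝ) (t : CliqueIdx C → ℝ) (τ : ℝ)
    (h : Fin N → ℝ) (z : CliqueIdx C → ℝ) (r : Fin m → ℝ) (w : CliqueIdx C → ℝ) (κ : ℝ)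
    (hs : MemS C s) (hτK : 0 ≤ τ)
    (hh : h = 0) (hz : MemS C z) (hr : r = 0) (hw : w = 0) (hκ : 0 ≤ κ)
    (heq : stackVec C h z r w κ = (hsdeQ C A H b c) *ᵥ stackVec C x s y t τ)
    (hτ : τ = 0) (hcx : c ⬝ᵥ x < 0) :
    ¬ ∃ (y' : Fin m → ℝ) (t' : CliqueIdx C → ℝ),
        Aᵀ *ᵥ y' + Hᵀ *ᵥ t' = c ∧ MemS C t' :=
  hsde_dual_infeasibility_general C A H b c x s y t τ h z r w κ hs hr hw heq hτ hcx
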